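/- Let δ > 0 and let H, L₁,…,L_m be matrices on ℂ^d with H Hermitian. Define the Lindbladian L[ρ] = −i[H,ρ] + Σ_j (L_j ρ L_j† − ½L_j†L_j ρ − ½ρ L_j†L_j), and the map M_δ[Q] = Σ_{j=0}^m A_j Q A_j† with A₀ = I − (δ/2)Σ_j L_j†L_j − iδH and A_j = √δ L_j (j ≥ 1). Then for any matrix Q with ‖Q‖₁ = 1, ‖M_δ[Q] − Q − δL[Q]‖₁ ≤ δ²(Σ_j ‖L_j‖² + ‖H‖)². -/

import Mathlib

open scoped ComplexOrder Matrix

/-- The trace norm `‖A‖₁ = Tr √(AᴴA)` of a complex square matrix. -/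
noncomputable def traceNorm {n : Type*} [Fintype n] [DecidableEq n]
    (A : Matrix n n ℂ) : ℝ :=
  (((Matrix.posSemidef_conjTranspose_mul_self A).1.eigenvectorUnitary : Matrix n n ℂ) *
      Matrix.diagonal (((↑) : ℝ → ℂ) ∘ (Real.sqrt ·) ∘ (Matrix.posSemidef_conjTranspose_mul_self A).1.eigenvalues) *
      (star (Matrix.posSemidef_conjTranspose_mul_self A).1.eigenvectorUnitary : Matrix n n ℂ)).trace.re

/-- The operator norm (largest singular value) of a complex square matrix. -/
noncomputable def opNorm {n : Type*} [Fintype n] [DecidableEq n]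
    (A : Matrix n n ℂ) : ℝ :=
  ‖LinearMap.toContinuousLinearMap (Matrix.toEuclideanLin A)‖

/-!
With the effective Hamiltonian `G = H - (i/2) ∑ⱼ LⱼᴴLⱼ` one has `A₀ = 1 - iδG`, and expanding
`A₀ Q A₀ᴴ` shows that `M_δ[Q] - Q - δ𝓛[Q]` is exactly `δ² G Q Gᴴ`. The bound then follows from
`‖G‖ ≤ ‖H‖ + ∑ⱼ‖Lⱼ‖²` and the Hölder inequality `‖X Q Y‖₁ ≤ ‖X‖ ‖Y‖ ‖Q‖₁`. The latter comes from
the variational formula `‖M‖₁ = max_{‖C‖ ≤ 1} Re tr (C M)`, proved with the eigenvectors `uᵢ` of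
`MᴴM`: the vectors `M uᵢ` are orthogonal with norms the singular values `σᵢ`.
-/

open Matrix
open scoped Matrix.Norms.L2Operator

namespace Matrix

variable {n : Type*} [Fintype n]

lemma conjTranspose_mul_apply_eq_inner (X Y : Matrix n n ℂ) (i j : n) :
    (Xᴴ * Y) i j = inner ℂ (WithLp.toLp 2 (Xᵀ i) : EuclideanSpace ℂ n) (WithLp.toLp 2 (Yᵀ j)) := by
  simp [mul_apply, EuclideanSpace.inner_eq_star_dotProduct, dotProduct, mul_comm]

lemma norm_toLp_transpose_sq (X : Matrix n n ℂ) (i : n) :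
    ‖(WithLp.toLp 2 (Xᵀ i) : EuclideanSpace ℂ n)‖ ^ 2 = ((Xᴴ * X) i i).re := by
  rw [conjTranspose_mul_apply_eq_inner, ← inner_self_eq_norm_sq (𝕜 := ℂ)]
  rfl

lemma transpose_mul_apply (X Y : Matrix n n ℂ) (i : n) : (X * Y)ᵀ i = X *ᵥ Yᵀ i := by
  ext k; simp [mul_apply, mulVec, dotProduct]

variable [DecidableEq n] (M : Matrix n n ℂ)

noncomputable def rightSingularVectors : Matrix n n ℂ :=
  (posSemidef_conjTranspose_mul_self M).1.eigenvectorUnitary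

noncomputable def singularValues (i : n) : ℝ :=
  √((posSemidef_conjTranspose_mul_self M).1.eigenvalues i)

lemma singularValues_nonneg (i : n) : 0 ≤ M.singularValues i := Real.sqrt_nonneg _

lemma rightSingularVectors_mem_unitaryGroup : M.rightSingularVectors ∈ unitaryGroup n ℂ :=
  Subtype.prop _

lemma conjTranspose_mul_self_mul_rightSingularVectors :
    (M * M.rightSingularVectors)ᴴ * (M * M.rightSingularVectors) =
      diagonal (fun i => ((M.singularValues i ^ 2 : ℝ) : ℂ)) := by
  have hP := posSemidef_conjTranspose_mul_self M
  simp only [singularValues, Real.sq_sqrt (hP.eigenvalues_nonneg _)]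
  have h := hP.1.conjStarAlgAut_star_eigenvectorUnitary
  rw [Unitary.conjStarAlgAut_star_apply] at h
  convert h using 1
  · rw [conjTranspose_mul, star_eq_conjTranspose]
    simp only [rightSingularVectors, Matrix.mul_assoc]
  · rfl

lemma norm_toLp_transpose_rightSingularVectors (i : n) :
    ‖(WithLp.toLp 2 (M.rightSingularVectorsᵀ i) : EuclideanSpace ℂ n)‖ = 1 := by
  rw [← sq_eq_sq₀ (norm_nonneg _) zero_le_one, one_pow, norm_toLp_transpose_sq,
    ← star_eq_conjTranspose, mem_unitaryGroup_iff'.mp M.rightSingularVectors_mem_unitaryGroup]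
  simp

lemma norm_toLp_transpose_mul_rightSingularVectors (i : n) :
    ‖(WithLp.toLp 2 ((M * M.rightSingularVectors)ᵀ i) : EuclideanSpace ℂ n)‖ =
      M.singularValues i := by
  rw [← sq_eq_sq₀ (norm_nonneg _) (M.singularValues_nonneg i), norm_toLp_transpose_sq,
    conjTranspose_mul_self_mul_rightSingularVectors, diagonal_apply_eq, Complex.ofReal_re]

end Matrix

section TraceNorm

variable {n : Type*} [Fintype n] [DecidableEq n]

lemma opNorm_eq_norm (A : Matrix n n ℂ) : opNorm A = ‖A‖ := rfl

lemma traceNorm_eq_sum_singularValues (M : Matrix n n ℂ) :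
    traceNorm M = ∑ i, M.singularValues i := by
  rw [traceNorm, trace_mul_cycle, Unitary.coe_star_mul_self, one_mul, trace_diagonal]
  simp [Complex.re_sum, singularValues]

lemma traceNorm_nonneg (M : Matrix n n ℂ) : 0 ≤ traceNorm M := by
  rw [traceNorm_eq_sum_singularValues]
  exact Finset.sum_nonneg fun i _ => M.singularValues_nonneg i

lemma re_trace_mul_le (C M : Matrix n n ℂ) : (C * M).trace.re ≤ ‖C‖ * traceNorm M := by
  set U := M.rightSingularVectors
  have hU : U * Uᴴ = 1 := mem_unitaryGroup_iff.mp M.rightSingularVectors_mem_unitaryGroup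
  have htrace : (C * M).trace = (Uᴴ * (C * (M * U))).trace := by
    rw [trace_mul_comm Uᴴ, Matrix.mul_assoc, Matrix.mul_assoc, hU, Matrix.mul_one]
  rw [htrace, trace, Complex.re_sum, traceNorm_eq_sum_singularValues, Finset.mul_sum]
  refine Finset.sum_le_sum fun i _ => ?_
  rw [diag_apply, conjTranspose_mul_apply_eq_inner, transpose_mul_apply]
  calc _ ≤ ‖inner ℂ (WithLp.toLp 2 (Uᵀ i) : EuclideanSpace ℂ n)
          (WithLp.toLp 2 (C *ᵥ (M * U)ᵀ i))‖ := Complex.re_le_norm _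
    _ ≤ 1 * ‖(WithLp.toLp 2 (C *ᵥ (M * U)ᵀ i) : EuclideanSpace ℂ n)‖ := by
      rw [← M.norm_toLp_transpose_rightSingularVectors i]
      exact norm_inner_le_norm _ _
    _ ≤ ‖C‖ * M.singularValues i := by
      rw [one_mul, ← M.norm_toLp_transpose_mul_rightSingularVectors i]
      exact C.l2_opNorm_mulVec (WithLp.toLp 2 _)

lemma exists_norm_le_one_traceNorm_le_re_trace (M : Matrix n n ℂ) :
    ∃ C : Matrix n n ℂ, ‖C‖ ≤ 1 ∧ traceNorm M ≤ (C * M).trace.re := by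
  set σ := M.singularValues
  set U := M.rightSingularVectors
  have hU : U ∈ unitaryGroup n ℂ := M.rightSingularVectors_mem_unitaryGroup
  set D : Matrix n n ℂ := diagonal fun i => (((σ i)⁻¹ : ℝ) : ℂ)
  have hD : Dᴴ = D := by simp [D, diagonal_conjTranspose]
  have hV := M.conjTranspose_mul_self_mul_rightSingularVectors
  -- `C` sends `M uᵢ` to `σᵢ uᵢ`; on the kernel of `M`, `σᵢ⁻¹ = 0⁻¹ = 0` is the right choice.
  set C := U * D * (M * U)ᴴ
  refine ⟨C, ?_, le_of_eq ?_⟩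
  · have hCC : C * Cᴴ = U * (D * ((M * U)ᴴ * (M * U)) * D) * Uᴴ := by
      simp only [C, conjTranspose_mul, conjTranspose_conjTranspose, hD, Matrix.mul_assoc]
    have hnorm : ‖C‖ * ‖C‖ ≤ 1 := by
      rw [← l2_opNorm_conjTranspose C, ← l2_opNorm_conjTranspose_mul_self,
        conjTranspose_conjTranspose, hCC, ← star_eq_conjTranspose U,
        CStarRing.norm_mul_mem_unitary _ (Unitary.star_mem hU),
        CStarRing.norm_mem_unitary_mul _ hU, hV, diagonal_mul_diagonal, diagonal_mul_diagonal,
        l2_opNorm_diagonal]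
      refine (pi_norm_le_iff_of_nonneg zero_le_one).mpr fun i => ?_
      simp [field, div_self_le_one]
    nlinarith [norm_nonneg C]
  · have htrace : (C * M).trace = (D * ((M * U)ᴴ * (M * U))).trace := by
      rw [show C * M = U * (D * (M * U)ᴴ * M) by simp only [C, Matrix.mul_assoc], trace_mul_comm]
      simp only [Matrix.mul_assoc]
    rw [htrace, hV, diagonal_mul_diagonal, trace_diagonal, Complex.re_sum,
      traceNorm_eq_sum_singularValues]
    refine Finset.sum_congr rfl fun i _ => ?_
    rw [← Complex.ofReal_mul, Complex.ofReal_re]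
    simp [σ, field]

lemma traceNorm_mul_mul_le (X Q Y : Matrix n n ℂ) :
    traceNorm (X * Q * Y) ≤ ‖X‖ * ‖Y‖ * traceNorm Q := by
  obtain ⟨C, hC, hCtrace⟩ := exists_norm_le_one_traceNorm_le_re_trace (X * Q * Y)
  have hcycle : (C * (X * Q * Y)).trace = (Y * C * X * Q).trace := by
    rw [trace_mul_comm, show X * Q * Y * C = (X * Q) * (Y * C) by simp only [Matrix.mul_assoc],
      trace_mul_comm]
    simp only [Matrix.mul_assoc]
  calc traceNorm (X * Q * Y) ≤ ‖Y * C * X‖ * traceNorm Q := by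
        rw [hcycle] at hCtrace
        exact hCtrace.trans (re_trace_mul_le _ Q)
    _ ≤ ‖X‖ * ‖Y‖ * traceNorm Q := by
        gcongr
        · exact traceNorm_nonneg Q
        calc ‖Y * C * X‖ ≤ ‖Y‖ * ‖C‖ * ‖X‖ :=
              (norm_mul_le _ _).trans (by gcongr; exact norm_mul_le _ _)
          _ ≤ ‖Y‖ * 1 * ‖X‖ := by gcongr
          _ = ‖X‖ * ‖Y‖ := by ring

end TraceNorm

section Lindblad

variable {n ι : Type*} [Fintype n] [Fintype ι]

noncomputable def lindbladian (H : Matrix n n ℂ) (L : ι → Matrix n n ℂ) (ρ : Matrix n n ℂ) :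
    Matrix n n ℂ :=
  -(Complex.I • (H * ρ - ρ * H)) +
    ∑ j, (L j * ρ * (L j)ᴴ - ((1:ℂ)/2) • ((L j)ᴴ * L j * ρ) - ((1:ℂ)/2) • (ρ * ((L j)ᴴ * L j)))

noncomputable def effectiveHamiltonian (H : Matrix n n ℂ) (L : ι → Matrix n n ℂ) :
    Matrix n n ℂ :=
  H - (Complex.I / 2) • ∑ j, (L j)ᴴ * L j

lemma conjTranspose_effectiveHamiltonian {H : Matrix n n ℂ} (hH : H.IsHermitian)
    (L : ι → Matrix n n ℂ) :
    (effectiveHamiltonian H L)ᴴ = H + (Complex.I / 2) • ∑ j, (L j)ᴴ * L j := by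
  simp [effectiveHamiltonian, conjTranspose_sum, hH.eq, sub_eq_add_neg, neg_div]

lemma lindbladian_eq {H : Matrix n n ℂ} (hH : H.IsHermitian) (L : ι → Matrix n n ℂ)
    (ρ : Matrix n n ℂ) :
    lindbladian H L ρ = -(Complex.I • (effectiveHamiltonian H L * ρ -
      ρ * (effectiveHamiltonian H L)ᴴ)) + ∑ j, L j * ρ * (L j)ᴴ := by
  rw [conjTranspose_effectiveHamiltonian hH, lindbladian, effectiveHamiltonian,
    Finset.sum_sub_distrib, Finset.sum_sub_distrib, ← Finset.smul_sum, ← Finset.smul_sum,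
    ← Finset.sum_mul, ← Finset.mul_sum]
  simp only [sub_mul, mul_add, smul_mul_assoc, mul_smul_comm, smul_sub, smul_add, smul_smul]
  match_scalars <;> ring_nf <;> simp only [Complex.I_sq] <;> ring

lemma norm_effectiveHamiltonian_le [DecidableEq n] (H : Matrix n n ℂ) (L : ι → Matrix n n ℂ) :
    ‖effectiveHamiltonian H L‖ ≤ ‖H‖ + (∑ j, ‖L j‖ ^ 2) / 2 := by
  calc ‖effectiveHamiltonian H L‖ ≤ ‖H‖ + ‖(Complex.I / 2) • ∑ j, (L j)ᴴ * L j‖ :=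
        norm_sub_le _ _
    _ ≤ ‖H‖ + (∑ j, ‖L j‖ ^ 2) / 2 := by
      rw [norm_smul, norm_div, Complex.norm_I, Complex.norm_two, one_div_mul_eq_div]
      gcongr
      refine (norm_sum_le _ _).trans (le_of_eq (Finset.sum_congr rfl fun j _ => ?_))
      rw [l2_opNorm_conjTranspose_mul_self, sq]

lemma kraus_sub_lindbladian_eq [DecidableEq n] {H : Matrix n n ℂ} (hH : H.IsHermitian)
    (L : ι → Matrix n n ℂ) (δ : ℝ) (ρ : Matrix n n ℂ) :
    (1 - (Complex.I * δ) • effectiveHamiltonian H L) * ρ *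
        (1 - (Complex.I * δ) • effectiveHamiltonian H L)ᴴ +
      (δ : ℂ) • ∑ j, L j * ρ * (L j)ᴴ - ρ - (δ : ℂ) • lindbladian H L ρ =
      ((δ : ℂ) • effectiveHamiltonian H L) * ρ * ((δ : ℂ) • effectiveHamiltonian H L)ᴴ := by
  have hstar : star (Complex.I * δ) = -(Complex.I * δ) := by simp
  rw [lindbladian_eq hH, conjTranspose_sub, conjTranspose_one, conjTranspose_smul, hstar,
    conjTranspose_smul, Complex.star_def, Complex.conj_ofReal]
  simp only [sub_mul, mul_sub, one_mul, mul_one, smul_mul_assoc, mul_smul_comm,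
    smul_sub, smul_add, smul_smul, smul_neg, Matrix.mul_assoc]
  match_scalars <;> ring_nf
  simp only [Complex.I_sq]
  ring

end Lindblad

/-- The map `M_δ[Q] = ∑ⱼ Aⱼ Q Aⱼᴴ` built from the Kraus operators
`A₀ = I − (δ/2)∑ⱼ LⱼᴴLⱼ − iδH`, `Aⱼ = √δ Lⱼ` agrees with the first-order expansion
`Q + δ𝓛[Q]` of Lindblad evolution up to `δ²(∑ⱼ‖Lⱼ‖² + ‖H‖)²` in trace norm. -/
theorem M_delta_first_order_accurate {d m : ℕ} (H : Matrix (Fin d) (Fin d) ℂ)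
    (hH : H.IsHermitian) (L : Fin m → Matrix (Fin d) (Fin d) ℂ) (δ : ℝ) (hδ : 0 < δ)
    (A₀ : Matrix (Fin d) (Fin d) ℂ)
    (hA₀ : A₀ = 1 - ((δ : ℂ)/2) • (∑ j, (L j)ᴴ * L j) - (Complex.I * (δ : ℂ)) • H)
    (A : Fin m → Matrix (Fin d) (Fin d) ℂ)
    (hA : ∀ j, A j = ((Real.sqrt δ : ℝ) : ℂ) • L j)
    (Lind : Matrix (Fin d) (Fin d) ℂ → Matrix (Fin d) (Fin d) ℂ)
    (hLind : ∀ ρ, Lind ρ = -(Complex.I • (H * ρ - ρ * H)) +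
      ∑ j, (L j * ρ * (L j)ᴴ - ((1:ℂ)/2) • ((L j)ᴴ * L j * ρ) - ((1:ℂ)/2) • (ρ * ((L j)ᴴ * L j))))
    (Q : Matrix (Fin d) (Fin d) ℂ) (hQ : traceNorm Q = 1) :
    traceNorm ((A₀ * Q * A₀ᴴ + ∑ j, A j * Q * (A j)ᴴ) - Q - (δ : ℂ) • Lind Q)
      ≤ δ ^ 2 * ((∑ j, opNorm (L j) ^ 2) + opNorm H) ^ 2 := by
  have hA₀G : A₀ = 1 - (Complex.I * δ) • effectiveHamiltonian H L := by
    rw [hA₀, effectiveHamiltonian, smul_sub, smul_smul]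
    match_scalars <;> ring_nf
    simp only [Complex.I_sq]
    ring
  have hjump : ∑ j, A j * Q * (A j)ᴴ = (δ : ℂ) • ∑ j, L j * Q * (L j)ᴴ := by
    simp only [hA, conjTranspose_smul, Complex.star_def, Complex.conj_ofReal, smul_mul_assoc,
      mul_smul_comm, smul_smul, Finset.smul_sum, ← Complex.ofReal_mul, Real.mul_self_sqrt hδ.le]
  set G := effectiveHamiltonian H L
  simp only [opNorm_eq_norm]
  have hG : ‖G‖ ≤ (∑ j, ‖L j‖ ^ 2) + ‖H‖ := by
    have : 0 ≤ ∑ j, ‖L j‖ ^ 2 := by positivity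
    linarith [norm_effectiveHamiltonian_le H L]
  rw [hA₀G, hjump, show Lind Q = lindbladian H L Q from hLind Q, kraus_sub_lindbladian_eq hH]
  calc traceNorm (((δ : ℂ) • G) * Q * ((δ : ℂ) • G)ᴴ)
      ≤ ‖(δ : ℂ) • G‖ * ‖((δ : ℂ) • G)ᴴ‖ * traceNorm Q := traceNorm_mul_mul_le _ _ _
    _ = δ ^ 2 * ‖G‖ ^ 2 := by
      rw [l2_opNorm_conjTranspose, hQ, norm_smul, Complex.norm_real, Real.norm_of_nonneg hδ.le]
      ring
    _ ≤ δ ^ 2 * ((∑ j, ‖L j‖ ^ 2) + ‖H‖) ^ 2 := by gcongr
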